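/- Let P(x) = Σ_{k=1}^N c_k e^{2πi x·y_k} with distinct y_k, h(x) = Σ_{k=1}^N |c_k|² e^{2πi x·y_k}, and let (A_n) be a van Hove sequence. Then (1/vol(A_n)) (1_{A_n}P) ∗ reflect(conj(1_{A_n}P)) converges to h uniformly on compact subsets of ℝ^d, where reflect(g)(x) = g(−x). -/

import Mathlib

/-!
Expanding the product, the normalized autocorrelation at `u` is the sum over pairs `(k, l)` of
`c k * conj (c l) * e_{y l}(u)` times the mean of `e_{y k - y l}` over `A n ∩ (u + A n)`. On the
diagonal this mean is `vol (A n ∩ (u + A n)) / vol (A n)`, which is `1` up to the van Hove boundary.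
Off the diagonal, `e_w` with `w = y k - y l ≠ 0` equals `-1` at some `v`, so translating by `v`
flips the sign of its integral over `A n`; that integral is therefore bounded by
`vol (A n Δ (v + A n))`, again a boundary term. One compact set controls all these boundaries,
uniformly in `u ∈ K`.
-/

open MeasureTheory Filter
open scoped Pointwise RealInnerProductSpace
open scoped ComplexConjugate

theorem norm_setIntegral_sub_setIntegral_le {X F : Type*} [MeasurableSpace X]
    [NormedAddCommGroup F] [NormedSpace ℝ F] {μ : Measure X} {f : X → F} {S T : Set X} {C : ℝ}
    (hS : MeasurableSet S) (hT : MeasurableSet T) (hfS : IntegrableOn f S μ)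
    (hfT : IntegrableOn f T μ) (hSfin : μ S ≠ ⊤) (hTfin : μ T ≠ ⊤) (hC : ∀ x, ‖f x‖ ≤ C) :
    ‖∫ x in S, f x ∂μ - ∫ x in T, f x ∂μ‖ ≤ C * (μ.real (S \ T) + μ.real (T \ S)) := by
  rw [← integral_inter_add_sdiff hT hfS, ← integral_inter_add_sdiff hS hfT, Set.inter_comm T S,
    add_sub_add_left_eq_sub, mul_add]
  exact (norm_sub_le _ _).trans <| add_le_add
    (norm_setIntegral_le_of_norm_le_const (measure_lt_top_of_subset Set.sdiff_subset hSfin)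
      fun x _ => hC x)
    (norm_setIntegral_le_of_norm_le_const (measure_lt_top_of_subset Set.sdiff_subset hTfin)
      fun x _ => hC x)

theorem tendstoUniformlyOn_of_norm_sub_le {α β F : Type*} [SeminormedAddCommGroup F]
    {f : β → F} {G : α → β → F} {l : Filter α} {s : Set β} {b : α → ℝ}
    (hb : Tendsto b l (nhds 0)) (h : ∀ n, ∀ x ∈ s, ‖f x - G n x‖ ≤ b n) :
    TendstoUniformlyOn G f l s := by
  refine Metric.tendstoUniformlyOn_iff.mpr fun δ hδ => ?_
  filter_upwards [hb.eventually_lt_const hδ] with n hn x hx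
  exact (dist_eq_norm _ _).trans_le (h n x hx) |>.trans_lt hn

section ExpInner

variable {E : Type*} [NormedAddCommGroup E] [InnerProductSpace ℝ E]

noncomputable def expInner (w t : E) : ℂ :=
  Complex.exp (2 * Real.pi * Complex.I * ((⟪w, t⟫ : ℝ) : ℂ))

theorem norm_expInner (w t : E) : ‖expInner w t‖ = 1 := by
  simp [expInner, Complex.norm_exp]

theorem expInner_zero_left (t : E) : expInner 0 t = 1 := by
  simp [expInner]

theorem expInner_add_right (w s t : E) : expInner w (s + t) = expInner w s * expInner w t := by
  simp only [expInner, inner_add_right, Complex.ofReal_add, ← Complex.exp_add]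
  ring_nf

theorem expInner_mul_conj_expInner_sub (w w' s u : E) :
    expInner w s * conj (expInner w' (s - u)) = expInner w' u * expInner (w - w') s := by
  simp only [expInner, ← Complex.exp_conj, ← Complex.exp_add, inner_sub_left, inner_sub_right,
    Complex.ofReal_sub, map_mul, map_sub, Complex.conj_I, Complex.conj_ofReal, map_ofNat,
    real_inner_comm u w']
  ring_nf

theorem continuous_expInner (w : E) : Continuous (expInner w) := by
  unfold expInner; fun_prop

theorem exists_expInner_eq_neg_one {w : E} (hw : w ≠ 0) : ∃ v, expInner w v = -1 := by
  refine ⟨(2 * ⟪w, w⟫)⁻¹ • w, ?_⟩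
  have hww : ((⟪w, w⟫ : ℝ) : ℂ) ≠ 0 := Complex.ofReal_ne_zero.mpr (inner_self_ne_zero.mpr hw)
  rw [expInner, real_inner_smul_right, ← Complex.exp_pi_mul_I]
  congr 1
  push_cast
  field_simp

variable [MeasurableSpace E] [BorelSpace E] {μ : Measure E}

theorem integrableOn_expInner (w : E) {S : Set E} (hS : μ S ≠ ⊤) :
    IntegrableOn (expInner w) S μ :=
  Measure.integrableOn_of_bounded (M := 1) hS (continuous_expInner w).aestronglyMeasurable
    (.of_forall fun t => (norm_expInner w t).le)

variable [μ.IsAddLeftInvariant]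

theorem setIntegral_vadd_expInner (w v : E) (S : Set E) :
    ∫ t in v +ᵥ S, expInner w t ∂μ = expInner w v * ∫ t in S, expInner w t ∂μ := by
  simp only [← Set.image_vadd, vadd_eq_add]
  rw [(measurePreserving_add_left μ v).setIntegral_image_emb
    (measurableEmbedding_addLeft v)]
  simp only [expInner_add_right, integral_const_mul]

theorem two_mul_norm_setIntegral_expInner_le {w v : E} (hv : expInner w v = -1) {A : Set E}
    (hA : MeasurableSet A) (hAfin : μ A ≠ ⊤) :
    2 * ‖∫ t in A, expInner w t ∂μ‖ ≤ μ.real (A \ (v +ᵥ A)) + μ.real ((v +ᵥ A) \ A) := by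
  have hvAfin : μ (v +ᵥ A) ≠ ⊤ := by rwa [measure_vadd]
  have hflip : (∫ t in A, expInner w t ∂μ) - ∫ t in v +ᵥ A, expInner w t ∂μ =
      2 * ∫ t in A, expInner w t ∂μ := by
    rw [setIntegral_vadd_expInner, hv]; ring
  have := norm_setIntegral_sub_setIntegral_le hA (hA.const_vadd v)
    (integrableOn_expInner w hAfin) (integrableOn_expInner w hvAfin) hAfin hvAfin
    (fun t => (norm_expInner w t).le)
  rwa [hflip, one_mul, norm_mul, Complex.norm_ofNat] at this

end ExpInner

theorem indicator_mul_conj_indicator_sub {G R : Type*} [AddCommGroup G] [CommSemiring R]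
    [StarRing R] (f : G → R) (A : Set G) (u s : G) :
    A.indicator f s * conj (A.indicator f (s - u)) =
      (A ∩ (u +ᵥ A)).indicator (fun s => f s * conj (f (s - u))) s := by
  have hmem : s ∈ u +ᵥ A ↔ s - u ∈ A := by
    rw [Set.mem_vadd_set_iff_neg_vadd_mem, vadd_eq_add, neg_add_eq_sub]
  simp only [Set.indicator, Set.mem_inter_iff, hmem]
  split_ifs <;> simp_all

section VanHove

variable {G : Type*} [AddGroup G] [TopologicalSpace G]

def vanHoveBoundary (K A : Set G) : Set G :=
  ((K + A) \ interior A) ∪ ((-K + closure Aᶜ) ∩ A)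

theorem vadd_diff_subset_vanHoveBoundary {K A : Set G} {u : G} (hu : u ∈ K) :
    (u +ᵥ A) \ A ⊆ vanHoveBoundary K A := by
  rintro x ⟨hxu, hxA⟩
  rw [Set.mem_vadd_set_iff_neg_vadd_mem] at hxu
  exact Or.inl ⟨⟨u, hu, -u +ᵥ x, hxu, add_neg_cancel_left u x⟩,
    fun h => hxA (interior_subset h)⟩

theorem diff_vadd_subset_vanHoveBoundary {K A : Set G} {u : G} (hu : -u ∈ K) :
    A \ (u +ᵥ A) ⊆ vanHoveBoundary K A := by
  rintro x ⟨hxA, hxu⟩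
  rw [Set.mem_vadd_set_iff_neg_vadd_mem] at hxu
  exact Or.inr ⟨⟨u, Set.mem_neg.mpr hu, -u +ᵥ x, subset_closure hxu, add_neg_cancel_left u x⟩,
    hxA⟩

theorem Bornology.IsBounded.vanHoveBoundary {E : Type*} [SeminormedAddCommGroup E]
    {K A : Set E} (hK : IsBounded K) (hA : IsBounded A) : IsBounded (vanHoveBoundary K A) :=
  ((hK.add hA).union hA).subset <| Set.union_subset_union Set.sdiff_subset Set.inter_subset_right

end VanHove

section Autocorrelation

variable {E : Type*} [NormedAddCommGroup E] [InnerProductSpace ℝ E] {ι : Type*} [Fintype ι]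

noncomputable def trigPoly (c : ι → ℂ) (y : ι → E) (t : E) : ℂ :=
  ∑ k, c k * expInner (y k) t

theorem trigPoly_mul_conj_trigPoly_sub (c : ι → ℂ) (y : ι → E) (s u : E) :
    trigPoly c y s * conj (trigPoly c y (s - u)) =
      ∑ k, ∑ l, c k * conj (c l) * expInner (y l) u * expInner (y k - y l) s := by
  simp only [trigPoly, map_sum, Finset.sum_mul_sum, map_mul]
  refine Finset.sum_congr rfl fun k _ => Finset.sum_congr rfl fun l _ => ?_
  rw [mul_mul_mul_comm, expInner_mul_conj_expInner_sub]
  ring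

theorem norm_sum_sub_sum_sum_mul_le [DecidableEq ι] (c z : ι → ℂ) (hz : ∀ k, ‖z k‖ = 1)
    (M : ι → ι → ℂ) {ε : ℝ} (hM : ∀ k l, ‖M k l - if k = l then 1 else 0‖ ≤ ε) :
    ‖∑ k, ((‖c k‖ ^ 2 : ℝ) : ℂ) * z k - ∑ k, ∑ l, c k * conj (c l) * z l * M k l‖ ≤
      (∑ k, ‖c k‖) ^ 2 * ε := by
  have hdiag : ∑ k, ((‖c k‖ ^ 2 : ℝ) : ℂ) * z k =
      ∑ k, ∑ l, c k * conj (c l) * z l * if k = l then 1 else 0 := by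
    simp [Complex.mul_conj, Complex.normSq_eq_norm_sq]
  simp only [hdiag, ← Finset.sum_sub_distrib, ← mul_sub]
  calc _ ≤ ∑ k, ∑ l, ‖c k‖ * ‖c l‖ * ε :=
        (norm_sum_le _ _).trans <| Finset.sum_le_sum fun k _ =>
          (norm_sum_le _ _).trans <| Finset.sum_le_sum fun l _ => by
            rw [norm_mul, norm_mul, norm_mul, hz, Complex.norm_conj, mul_one, norm_sub_rev]
            gcongr
            exact hM k l
    _ = (∑ k, ‖c k‖) ^ 2 * ε := by
        rw [sq, Finset.sum_mul_sum, Finset.sum_mul]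
        simp only [Finset.sum_mul]

variable [MeasurableSpace E] [BorelSpace E] {μ : Measure E}

theorem integral_indicator_trigPoly_mul_conj_indicator_sub (c : ι → ℂ) (y : ι → E)
    {A : Set E} (hA : MeasurableSet A) (hAfin : μ A ≠ ⊤) (u : E) :
    ∫ s, A.indicator (trigPoly c y) s * conj (A.indicator (trigPoly c y) (s - u)) ∂μ =
      ∑ k, ∑ l, c k * conj (c l) * expInner (y l) u *
        ∫ s in A ∩ (u +ᵥ A), expInner (y k - y l) s ∂μ := by
  have hSfin : μ (A ∩ (u +ᵥ A)) ≠ ⊤ := (measure_lt_top_of_subset Set.inter_subset_left hAfin).ne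
  have hint : ∀ w, IntegrableOn (expInner w) (A ∩ (u +ᵥ A)) μ :=
    fun w => integrableOn_expInner w hSfin
  simp only [indicator_mul_conj_indicator_sub, trigPoly_mul_conj_trigPoly_sub]
  rw [integral_indicator (hA.inter (hA.const_vadd u)), integral_finsetSum _
    fun k _ => integrable_finsetSum _ fun l _ => (hint _).const_mul _]
  refine Finset.sum_congr rfl fun k _ => ?_
  rw [integral_finsetSum _ fun l _ => (hint _).const_mul _]
  simp only [integral_const_mul]

variable {A B : Set E} {u : E}

theorem norm_inv_mul_setIntegral_expInner_zero_sub_one_le (hA : MeasurableSet A)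
    (hAfin : μ A ≠ ⊤) (hA0 : μ A ≠ 0) (hBfin : μ B ≠ ⊤) (huB : A \ (u +ᵥ A) ⊆ B) :
    ‖((μ.real A)⁻¹ : ℂ) * ∫ s in A ∩ (u +ᵥ A), expInner 0 s ∂μ - 1‖ ≤ μ.real B / μ.real A := by
  have hApos : 0 < μ.real A := ENNReal.toReal_pos hA0 hAfin
  have hdiff : μ.real A - μ.real (A ∩ (u +ᵥ A)) = μ.real (A \ (u +ᵥ A)) := by
    rw [← measureReal_sdiff Set.inter_subset_left (hA.inter (hA.const_vadd u)) hAfin,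
      Set.sdiff_self_inter]
  have hrepr : ((μ.real A)⁻¹ : ℂ) * ∫ s in A ∩ (u +ᵥ A), expInner 0 s ∂μ - 1 =
      ((-(μ.real (A \ (u +ᵥ A)) / μ.real A) : ℝ) : ℂ) := by
    simp only [expInner_zero_left, setIntegral_const, Complex.real_smul, mul_one, ← hdiff]
    have : (μ.real A : ℂ) ≠ 0 := Complex.ofReal_ne_zero.mpr hApos.ne'
    push_cast
    field_simp
    ring
  rw [hrepr, Complex.norm_real, norm_neg, Real.norm_of_nonneg (by positivity)]
  gcongr

theorem norm_setIntegral_expInner_inter_vadd_le [μ.IsAddLeftInvariant] {w v : E}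
    (hv : expInner w v = -1) (hA : MeasurableSet A) (hAfin : μ A ≠ ⊤) (hBfin : μ B ≠ ⊤)
    (huB : A \ (u +ᵥ A) ⊆ B) (hvB : A \ (v +ᵥ A) ⊆ B ∧ (v +ᵥ A) \ A ⊆ B) :
    ‖∫ s in A ∩ (u +ᵥ A), expInner w s ∂μ‖ ≤ 2 * μ.real B := by
  have hSfin : μ (A ∩ (u +ᵥ A)) ≠ ⊤ := (measure_lt_top_of_subset Set.inter_subset_left hAfin).ne
  have hA_le : ‖∫ s in A, expInner w s ∂μ‖ ≤ μ.real B := by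
    have := two_mul_norm_setIntegral_expInner_le hv hA hAfin (μ := μ)
    linarith [measureReal_mono hvB.1 hBfin, measureReal_mono hvB.2 hBfin]
  have hAS_le : ‖(∫ s in A, expInner w s ∂μ) - ∫ s in A ∩ (u +ᵥ A), expInner w s ∂μ‖ ≤
      μ.real B := by
    have := norm_setIntegral_sub_setIntegral_le hA (hA.inter (hA.const_vadd u))
      (integrableOn_expInner w hAfin) (integrableOn_expInner w hSfin) hAfin hSfin
      (fun t => (norm_expInner w t).le)
    rw [Set.sdiff_self_inter, Set.sdiff_eq_empty.mpr Set.inter_subset_left, measureReal_empty,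
      add_zero, one_mul] at this
    exact this.trans (measureReal_mono huB hBfin)
  calc _ = ‖(∫ s in A, expInner w s ∂μ) -
        ((∫ s in A, expInner w s ∂μ) - ∫ s in A ∩ (u +ᵥ A), expInner w s ∂μ)‖ := by
        rw [sub_sub_cancel]
    _ ≤ 2 * μ.real B := (norm_sub_le _ _).trans (by linarith)

theorem norm_trigPoly_sub_autocorrelation_le [μ.IsAddLeftInvariant] (c : ι → ℂ) (y : ι → E)
    (hA : MeasurableSet A) (hAfin : μ A ≠ ⊤) (hA0 : μ A ≠ 0) (hBfin : μ B ≠ ⊤)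
    {v : ι → ι → E} (hv : ∀ k l, k ≠ l → expInner (y k - y l) (v k l) = -1)
    (hvB : ∀ k l, A \ (v k l +ᵥ A) ⊆ B ∧ (v k l +ᵥ A) \ A ⊆ B) (huB : A \ (u +ᵥ A) ⊆ B) :
    ‖trigPoly (fun k => ((‖c k‖ ^ 2 : ℝ) : ℂ)) y u - ((μ.real A)⁻¹ : ℝ) *
        ∫ s, A.indicator (trigPoly c y) s * conj (A.indicator (trigPoly c y) (s - u)) ∂μ‖ ≤
      (∑ k, ‖c k‖) ^ 2 * (2 * μ.real B / μ.real A) := by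
  classical
  have hApos : 0 < μ.real A := ENNReal.toReal_pos hA0 hAfin
  rw [integral_indicator_trigPoly_mul_conj_indicator_sub c y hA hAfin, Finset.mul_sum]
  simp only [Finset.mul_sum, mul_left_comm (((μ.real A)⁻¹ : ℝ) : ℂ)]
  refine norm_sum_sub_sum_sum_mul_le c _ (fun k => norm_expInner _ _) _ fun k l => ?_
  rcases eq_or_ne k l with rfl | hkl
  · rw [if_pos rfl, sub_self, Complex.ofReal_inv]
    refine (norm_inv_mul_setIntegral_expInner_zero_sub_one_le hA hAfin hA0 hBfin huB).trans ?_
    rw [mul_div_assoc]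
    linarith [show 0 ≤ μ.real B / μ.real A by positivity]
  · rw [if_neg hkl, sub_zero, norm_mul, Complex.norm_real, Real.norm_of_nonneg (by positivity),
      inv_mul_eq_div]
    gcongr
    exact norm_setIntegral_expInner_inter_vadd_le (hv k l hkl) hA hAfin hBfin huB (hvB k l)

end Autocorrelation

/-- For a trigonometric polynomial `P` with distinct frequencies and a van Hove sequence
`(A n)`, the normalized convolutions `(1/vol(A n)) (1_{A n}P) ∗ reflect(conj(1_{A n}P))`
converge to `h(u) = Σ_k |c_k|² e^{2πi u·y_k}` uniformly on compact subsets of `ℝ^d`. -/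
theorem trig_polynomial_doubly_restricted_convergence (d N : ℕ) (c : Fin N → ℂ)
    (y : Fin N → EuclideanSpace ℝ (Fin d)) (hy : Function.Injective y)
    (A : ℕ → Set (EuclideanSpace ℝ (Fin d)))
    (hbdd : ∀ n, Bornology.IsBounded (A n))
    (hmeas : ∀ n, MeasurableSet (A n))
    (hpos : ∀ n, 0 < volume (A n))
    (hvH : ∀ K : Set (EuclideanSpace ℝ (Fin d)), IsCompact K →
      Tendsto (fun n =>
          volume (((K + A n) \ interior (A n)) ∪ (((-K) + closure ((A n)ᶜ)) ∩ A n)) /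
            volume (A n))
        atTop (nhds 0)) :
    ∀ K : Set (EuclideanSpace ℝ (Fin d)), IsCompact K →
      TendstoUniformlyOn (fun n (u : EuclideanSpace ℝ (Fin d)) =>
          (((volume (A n)).toReal⁻¹ : ℝ) : ℂ) *
            ∫ s,
              (A n).indicator (fun t =>
                ∑ k, c k * Complex.exp (2 * Real.pi * Complex.I * ((⟪y k, t⟫ : ℝ) : ℂ))) s *
                (starRingEnd ℂ)
                  ((A n).indicator (fun t =>
                    ∑ k, c k *
                      Complex.exp (2 * Real.pi * Complex.I * ((⟪y k, t⟫ : ℝ) : ℂ))) (s - u)))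
        (fun u => ∑ k, ((‖c k‖ ^ 2 : ℝ) : ℂ) *
          Complex.exp (2 * Real.pi * Complex.I * ((⟪y k, u⟫ : ℝ) : ℂ)))
        atTop K := by
  intro K hK
  have hhalf : ∀ k l, ∃ v, k ≠ l → expInner (y k - y l) v = -1 := fun k l => by
    by_cases hkl : k = l
    · exact ⟨0, (absurd hkl ·)⟩
    · exact (exists_expInner_eq_neg_one (sub_ne_zero.mpr (hy.ne hkl))).imp fun _ hv _ => hv
  choose v hv using hhalf
  -- `K'` contains `±u` for `u ∈ K` and every `±v k l`, so each translate of `A n` that occurs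
  -- differs from `A n` only inside `vanHoveBoundary K' (A n)`.
  set L := K ∪ Set.range (Function.uncurry v)
  set K' := L ∪ -L
  have hL : IsCompact L := hK.union (Set.finite_range _).isCompact
  have hK' : IsCompact K' := hL.union hL.neg
  have hmemL : ∀ x ∈ L, x ∈ K' ∧ -x ∈ K' := fun x hx => ⟨.inl hx, .inr (by simpa using hx)⟩
  have hlim : Tendsto (fun n => (∑ k, ‖c k‖) ^ 2 *
      (2 * volume.real (vanHoveBoundary K' (A n)) / volume.real (A n))) atTop (nhds 0) := by
    have hratio : Tendsto (fun n => volume.real (vanHoveBoundary K' (A n)) / volume.real (A n))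
        atTop (nhds 0) := by
      have := (ENNReal.tendsto_toReal ENNReal.zero_ne_top).comp (hvH K' hK')
      rw [ENNReal.toReal_zero] at this
      exact this.congr fun n => ENNReal.toReal_div _ _
    simpa only [mul_div_assoc, mul_zero] using (hratio.const_mul 2).const_mul ((∑ k, ‖c k‖) ^ 2)
  refine tendstoUniformlyOn_of_norm_sub_le hlim fun n u hu => ?_
  have hvB (k l) := hmemL (v k l) (.inr ⟨(k, l), rfl⟩)
  exact norm_trigPoly_sub_autocorrelation_le c y (hmeas n) (hbdd n).measure_lt_top.ne
    (hpos n).ne' ((hK'.isBounded.vanHoveBoundary (hbdd n)).measure_lt_top.ne) hv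
    (fun k l => ⟨diff_vadd_subset_vanHoveBoundary (hvB k l).2,
      vadd_diff_subset_vanHoveBoundary (hvB k l).1⟩)
    (diff_vadd_subset_vanHoveBoundary (hmemL u (.inl hu)).2)
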